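/- Let n ≥ 2, N = n(n−1), and let u be a subword of λ̂_n with skip indices i_1 < ⋯ < i_s and skip reflections r^u = [r_1, …, r_s]. Then for every j ∈ {1, …, s} and every ℓ with i_j ≤ ℓ < i_{j+1} (where i_{s+1} := N+1), one has r_1 r_2 ⋯ r_j = (s_0 s_1 ⋯ s_{ℓ−1}) · u_{(ℓ)}^{−1}, where s_0 s_1 ⋯ s_{ℓ−1} is the product of the first ℓ letters of λ̂_n. -/

import Mathlib

/-!
Put `Φ(ℓ) = (s₀ ⋯ s_{ℓ-1}) u_{(ℓ)}⁻¹`, so `Φ(0) = e`. Since every letter is an involution,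
`Φ(m+1) = Φ(m)` when the letter `s_m` is taken, while `Φ(m+1) = Φ(m) t_{m+1}` when it is
skipped, because `t_{m+1} = u_{(m)} s_m u_{(m)}⁻¹` and `u_{(m+1)} = u_{(m)}`. Hence `Φ(ℓ)` is
the product of the skip reflections at the skips `≤ ℓ`, which for `i_j ≤ ℓ < i_{j+1}` are
exactly `r₁, …, r_j`.
-/

/-- The affine reflection `((i,j))` of the affine symmetric group `W̃ₙ`, as a function
`ℤ → ℤ`: it interchanges `i + k*n` and `j + k*n` for every `k ∈ ℤ` and fixes all
integers not congruent to `i` or `j` mod `n`. -/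
def affRefl (n : ℕ) (i j : ℤ) : ℤ → ℤ := fun k =>
  if (k - i) % (n : ℤ) = 0 then k - i + j
  else if (k - j) % (n : ℤ) = 0 then k - j + i
  else k

/-- `t : ℤ → ℤ` is an affine reflection of `W̃ₙ`. -/
def IsAffRefl (n : ℕ) (t : ℤ → ℤ) : Prop :=
  ∃ i j : ℤ, (i - j) % (n : ℤ) ≠ 0 ∧ t = affRefl n i j

/-- The simple reflection `sⱼ = ((j, j+1))`. -/
def simpleRefl (n : ℕ) (j : ℤ) : ℤ → ℤ := affRefl n j (j + 1)

/-- The translation `λₙ`: it sends `k ≡ 0 (mod n)` to `k - n(n-1)` and all other `k`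
to `k + n`. -/
def lam (n : ℕ) : ℤ → ℤ := fun k =>
  if k % (n : ℤ) = 0 then k - (n : ℤ) * ((n : ℤ) - 1) else k + (n : ℤ)

/-- The product `r₁ r₂ ⋯ rₘ` of a list of elements, with `(w·v)(k) = w(v(k))`. -/
def listProd (l : List (ℤ → ℤ)) : ℤ → ℤ := l.foldr (· ∘ ·) id

/-- `l` is a factorization of `λₙ` into affine reflections. -/
def IsFactorization (n : ℕ) (l : List (ℤ → ℤ)) : Prop :=
  (∀ t ∈ l, IsAffRefl n t) ∧ listProd l = lam n

/-- A tree-like factorization of `λₙ`: a factorization `[r₁, …, r_{2n-2}]` into `2n-2`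
affine reflections such that there are integers `a₀, …, a_{2n-2}` and `b₁, …, b_{2n-2}`
with `r_k = ((a_{k-1}, b_k))`, `a_{k-1} < b_k` and `a_k ≡ b_k (mod n)`
(0-based: `r` at index `k` equals `((a k, b (k+1)))`). -/
def IsTreeLike (n : ℕ) (l : List (ℤ → ℤ)) : Prop :=
  IsFactorization n l ∧ l.length = 2 * n - 2 ∧
  ∃ a b : ℕ → ℤ, ∀ k : ℕ, ∀ h : k < l.length,
    l.get ⟨k, h⟩ = affRefl n (a k) (b (k + 1)) ∧
    a k < b (k + 1) ∧ (a (k + 1) - b (k + 1)) % (n : ℤ) = 0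

/-- `a₀ < a₁ < ⋯` is a strictly increasing endpoint sequence of the factorization `l`:
`r_ℓ = ((a_{ℓ-1}, a_ℓ))` (0-based: `r` at index `k` is `((a k, a (k+1)))`). -/
def EndSeq (n : ℕ) (l : List (ℤ → ℤ)) (a : ℕ → ℤ) : Prop :=
  ∀ k : ℕ, ∀ h : k < l.length,
    a k < a (k + 1) ∧ l.get ⟨k, h⟩ = affRefl n (a k) (a (k + 1))

/-- The representative of `x` modulo `n` lying in `{1, …, n}`. -/
def resOne (n : ℕ) (x : ℤ) : ℤ := if x % (n : ℤ) = 0 then (n : ℤ) else x % (n : ℤ)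

/-- `nb_k(r)` for the endpoint sequence `a` of a tree-like factorization of `λₙ`:
the list of the residues `a_i mod n` (representatives in `{1, …, n}`), in increasing
order of the index `i ∈ {1, …, 2n-2}`, over those `i` with `a_{i-1} ≡ k (mod n)`
(0-based: indices `i < 2n-2` with `a i ≡ k`, recording the residue of `a (i+1)`). -/
def nb (n : ℕ) (a : ℕ → ℤ) (k : ℤ) : List ℤ :=
  ((List.range (2 * n - 2)).filter (fun i => decide ((a i - k) % (n : ℤ) = 0))).map
    (fun i => resOne n (a (i + 1)))

/-- A cyclic factorization of `λₙ`: a tree-like factorization such that, for an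
endpoint sequence `a` as above, (i) `nb_n` is strictly increasing; and (ii) for each
`k ∈ {1, …, n-1}`, writing `nb_k = [c₁, …, c_ℓ]`, there is `j ∈ {1, …, ℓ}` with
`c_j < c_{j+1} < ⋯ < c_{ℓ-1} < k < c₁ < ⋯ < c_{j-1}`. -/
def IsCyclicFact (n : ℕ) (l : List (ℤ → ℤ)) : Prop :=
  IsTreeLike n l ∧
  ∃ a : ℕ → ℤ, EndSeq n l a ∧
    List.Chain' (· < ·) (nb n a (n : ℤ)) ∧
    (∀ k : ℤ, 1 ≤ k → k ≤ (n : ℤ) - 1 →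
      ∃ m : ℕ, m < (nb n a k).length ∧
        List.Chain' (· < ·)
          ((nb n a k).dropLast.drop m ++ k :: (nb n a k).dropLast.take m))

/-- The letter at (0-based) position `j` of the subword of `λ̂ₙ` with skip set `S`:
the identity `e` if `j` is a skip, and the simple reflection `sⱼ` otherwise. -/
def letterAt (n : ℕ) (S : Finset ℕ) (j : ℕ) : ℤ → ℤ :=
  if j ∈ S then id else simpleRefl n (j : ℤ)

/-- The subword of the word `λ̂ₙ = [s₀, s₁, …, s_{n-1}]^{n-1}` (of length `N = n(n-1)`,
whose letter at 0-based position `j` is `s_j`) with skip set `S`. -/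
def subword (n : ℕ) (S : Finset ℕ) : List (ℤ → ℤ) :=
  (List.range (n * (n - 1))).map (letterAt n S)

/-- `u_{(j)}`: the product of the first `j` letters of the subword. -/
def uPref (n : ℕ) (S : Finset ℕ) (j : ℕ) : ℤ → ℤ :=
  listProd ((subword n S).take j)

/-- `u_{(j)}⁻¹`: since every letter is an involution, the inverse of `u_{(j)}` is the
product of the first `j` letters in reverse order. -/
def uPrefInv (n : ℕ) (S : Finset ℕ) (j : ℕ) : ℤ → ℤ :=
  listProd (((subword n S).take j).reverse)

/-- The element `t_{j+1} = u_{(j)} s_j u_{(j)}⁻¹` of `inv(u)` (0-based `j`). -/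
def conjAt (n : ℕ) (S : Finset ℕ) (j : ℕ) : ℤ → ℤ :=
  uPref n S j ∘ simpleRefl n (j : ℤ) ∘ uPrefInv n S j

/-- The (0-based) skip indices of the subword, in increasing order. -/
def skipIdx (S : Finset ℕ) : List ℕ := S.sort (· ≤ ·)

/-- The sequence `r^u` of skip reflections of the subword with skip set `S`. -/
def skipRefls (n : ℕ) (S : Finset ℕ) : List (ℤ → ℤ) :=
  (skipIdx S).map (conjAt n S)

/-- The subword with skip set `S` is a member of `S_n`: it is a subword of `λ̂ₙ`
with exactly `2n-2` skips whose product is the identity. -/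
def SnMem (n : ℕ) (S : Finset ℕ) : Prop :=
  S ⊆ Finset.range (n * (n - 1)) ∧ S.card = 2 * n - 2 ∧ listProd (subword n S) = id

/-- The product of the suffix `r_{i+1} ⋯ r_m` (0-based: drops the first `i` factors). -/
def suffixProd (l : List (ℤ → ℤ)) (i : ℕ) : ℤ → ℤ := listProd (l.drop i)

/-- The cyclic segment product `u_{a+1} u_{a+2} ⋯ u_{a+L}` of the subword with skip set
`S` (0-based starting position `a`, indices taken modulo `N = n(n-1)`). -/
def segProd (n : ℕ) (S : Finset ℕ) (a L : ℕ) : ℤ → ℤ :=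
  listProd ((List.range L).map (fun t => letterAt n S ((a + t) % (n * (n - 1)))))

theorem listProd_append (a b : List (ℤ → ℤ)) :
    listProd (a ++ b) = listProd a ∘ listProd b := by
  induction a with
  | nil => rfl
  | cons g a ih => simp only [listProd, List.cons_append, List.foldr_cons] at ih ⊢; rw [ih]; rfl

theorem listProd_reverse_comp_listProd {l : List (ℤ → ℤ)}
    (hl : ∀ g ∈ l, Function.Involutive g) : listProd l.reverse ∘ listProd l = id := by
  induction l with
  | nil => rfl
  | cons g l ih =>
    have hg : g ∘ g = id := (hl g List.mem_cons_self).comp_self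
    calc listProd (g :: l).reverse ∘ listProd (g :: l)
        = listProd l.reverse ∘ (g ∘ g) ∘ listProd l := by
          rw [List.reverse_cons, listProd_append]; rfl
      _ = id := by rw [hg, Function.id_comp, ih fun g' hg' => hl g' (List.mem_cons_of_mem _ hg')]

theorem affRefl_involutive {n : ℕ} {i j : ℤ} (hij : (i - j) % (n : ℤ) ≠ 0) :
    Function.Involutive (affRefl n i j) := by
  intro k
  rw [ne_eq, ← Int.dvd_iff_emod_eq_zero] at hij
  simp only [affRefl, ← Int.dvd_iff_emod_eq_zero]
  by_cases hi : (n : ℤ) ∣ k - i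
  · have : ¬ (n : ℤ) ∣ k - i + j - i := by
      rw [show k - i + j - i = (k - i) - (i - j) by ring]
      exact (dvd_sub_right hi).not.mpr hij
    simp [hi, this]
  · by_cases hj : (n : ℤ) ∣ k - j <;> simp [hi, hj]

theorem simpleRefl_involutive {n : ℕ} (hn : n ≠ 1) (j : ℤ) :
    Function.Involutive (simpleRefl n j) := by
  refine affRefl_involutive ?_
  rw [ne_eq, ← Int.dvd_iff_emod_eq_zero, show j - (j + 1) = -1 by ring, Int.dvd_neg]
  exact_mod_cast Nat.dvd_one.not.mpr hn

theorem List.SortedLT.mem_take_succ_iff {α : Type*} [LinearOrder α] {l : List α}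
    (hl : l.SortedLT) {j : ℕ} (hj : j < l.length) {a b : α} (hlo : l[j] < b)
    (hhi : ∀ h : j + 1 < l.length, b ≤ l[j + 1]) :
    a ∈ l.take (j + 1) ↔ a ∈ l ∧ a < b := by
  rw [List.mem_take_iff_getElem, List.mem_iff_getElem]
  constructor
  · rintro ⟨i, hi, rfl⟩
    exact ⟨⟨i, by omega, rfl⟩, (hl.getElem_le_getElem_iff.mpr (by omega)).trans_lt hlo⟩
  · rintro ⟨⟨i, hi, rfl⟩, hib⟩
    refine ⟨i, ?_, rfl⟩
    by_contra hij
    have hj1 : j + 1 < l.length := by omega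
    exact (hhi hj1).not_gt ((hl.getElem_le_getElem_iff.mpr (by omega)).trans_lt hib)

theorem skipIdx_take_succ_eq_filter_range (S : Finset ℕ) {j : ℕ} (hj : j < (skipIdx S).length)
    {ℓ : ℕ} (hlo : (skipIdx S)[j] < ℓ)
    (hhi : ∀ h : j + 1 < (skipIdx S).length, ℓ ≤ (skipIdx S)[j + 1]) :
    (skipIdx S).take (j + 1) = (List.range ℓ).filter (· ∈ S) := by
  have hsort : (skipIdx S).SortedLT := Finset.sortedLT_sort S
  refine List.SortedLT.eq_of_mem_iff
    (hsort.pairwise.sublist (List.take_sublist _ _)).sortedLT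
    ((List.sortedLT_range ℓ).pairwise.sublist List.filter_sublist).sortedLT fun a => ?_
  rw [hsort.mem_take_succ_iff hj hlo hhi]
  simp [skipIdx, and_comm]

section Subword

variable {n : ℕ} (S : Finset ℕ)

theorem letterAt_involutive (hn : n ≠ 1) (m : ℕ) : Function.Involutive (letterAt n S m) := by
  unfold letterAt
  split_ifs
  · exact fun _ => rfl
  · exact simpleRefl_involutive hn m

theorem uPrefInv_comp_uPref (hn : n ≠ 1) (m : ℕ) : uPrefInv n S m ∘ uPref n S m = id := by
  refine listProd_reverse_comp_listProd fun g hg => ?_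
  obtain ⟨t, -, rfl⟩ := List.mem_map.mp (List.mem_of_mem_take hg)
  exact letterAt_involutive S hn t

theorem uPrefInv_succ {m : ℕ} (hm : m < n * (n - 1)) :
    uPrefInv n S (m + 1) = letterAt n S m ∘ uPrefInv n S m := by
  have : (subword n S)[m]? = some (letterAt n S m) := by simp [subword, hm]
  rw [uPrefInv, List.take_add_one, this, List.reverse_append, listProd_append]
  rfl

theorem listProd_simpleRefl_comp_uPrefInv (hn : n ≠ 1) :
    ∀ ℓ ≤ n * (n - 1),
      listProd ((List.range ℓ).map fun t : ℕ => simpleRefl n t) ∘ uPrefInv n S ℓ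
        = listProd (((List.range ℓ).filter (· ∈ S)).map (conjAt n S))
  | 0, _ => rfl
  | m + 1, hm => by
    have ih := listProd_simpleRefl_comp_uPrefInv hn m (by omega)
    have hU (k : ℤ) : uPrefInv n S m (uPref n S m k) = k :=
      congrFun (uPrefInv_comp_uPref S hn m) k
    simp only [List.range_succ, List.filter_append, List.map_append, listProd_append,
      uPrefInv_succ S (show m < n * (n - 1) by omega), ← ih]
    funext k
    by_cases hmS : m ∈ S
    · simp [letterAt, hmS, conjAt, listProd, hU]
    · simp [letterAt, hmS, listProd, simpleRefl_involutive hn m _]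

end Subword

/-- Here `j` is 0-based, so the left side is `r₁ ⋯ r_{j+1}`, and the skip at 0-based
position `i` has 1-based index `i + 1`. -/
theorem stmt8_general (n : ℕ) (hn : 2 ≤ n) (S : Finset ℕ) :
    ∀ j : ℕ, ∀ hj : j < (skipIdx S).length, ∀ ℓ : ℕ, ℓ ≤ n * (n - 1) →
      (skipIdx S).get ⟨j, hj⟩ + 1 ≤ ℓ →
      (∀ hj1 : j + 1 < (skipIdx S).length, ℓ < (skipIdx S).get ⟨j + 1, hj1⟩ + 1) →
      listProd ((skipRefls n S).take (j + 1))
        = listProd ((List.range ℓ).map (fun t => simpleRefl n (t : ℤ)))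
            ∘ uPrefInv n S ℓ := by
  intro j hj ℓ hℓN hlo hhi
  have hskip : (skipIdx S).take (j + 1) = (List.range ℓ).filter (· ∈ S) :=
    skipIdx_take_succ_eq_filter_range S hj hlo fun h => Nat.lt_succ_iff.mp (hhi h)
  rw [skipRefls, ← List.map_take, hskip,
    ← listProd_simpleRefl_comp_uPrefInv S (by omega) ℓ hℓN]
  simp only [bind_pure_comp, List.map_eq_map, List.map_map]
  rfl

/-- For a subword `u` of `λ̂ₙ` with skip indices `i₁ < ⋯ < i_s` and skip
reflections `r^u = [r₁, …, r_s]`: for every `j` and every (1-based) `ℓ` with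
`i_j ≤ ℓ < i_{j+1}` (where `i_{s+1} = N + 1`), one has
`r₁ ⋯ r_j = (s₀ s₁ ⋯ s_{ℓ-1}) · u_{(ℓ)}⁻¹`.  (Here `j` is 0-based, so `r₁ ⋯ r_j`
is the product of the first `j+1` skip reflections, the 1-based skip index is
`(skipIdx S).get ⟨j, hj⟩ + 1`, and `u_{(ℓ)}⁻¹` is the reversed prefix product.) -/
theorem stmt8 (n : ℕ) (hn : 2 ≤ n) (S : Finset ℕ)
    (hS : S ⊆ Finset.range (n * (n - 1))) :
    ∀ j : ℕ, ∀ hj : j < (skipIdx S).length, ∀ ℓ : ℕ, ℓ ≤ n * (n - 1) →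
      (skipIdx S).get ⟨j, hj⟩ + 1 ≤ ℓ →
      (∀ hj1 : j + 1 < (skipIdx S).length, ℓ < (skipIdx S).get ⟨j + 1, hj1⟩ + 1) →
      listProd ((skipRefls n S).take (j + 1))
        = listProd ((List.range ℓ).map (fun t => simpleRefl n (t : ℤ)))
            ∘ uPrefInv n S ℓ :=
  stmt8_general n hn S
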